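/- The complex linear span of SU(d) inside M_d(ℂ) is all of M_d(ℂ), for every d ≥ 1. -/

import Mathlib

open Matrix

/-- The set of special unitary `d × d` complex matrices. -/
def SU (d : ℕ) : Set (Matrix (Fin d) (Fin d) ℂ) :=
  {V | V ∈ Matrix.unitaryGroup (Fin d) ℂ ∧ V.det = 1}

/-- Every unitary matrix lies in the span of `SU d`. -/
lemma unitary_mem_span_SU {d : ℕ} (hd : 1 ≤ d) (U : Matrix (Fin d) (Fin d) ℂ)
    (hU : U ∈ Matrix.unitaryGroup (Fin d) ℂ) : U ∈ Submodule.span ℂ (SU d) := by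
  obtain ⟨c, hc⟩ := IsAlgClosed.exists_pow_nat_eq U.det (n := d) hd
  have hdet : ‖U.det‖ = 1 := by
    have h1 := (Matrix.det_of_mem_unitary hU).1
    have h2 : ‖star U.det * U.det‖ = 1 := by rw [h1]; simp
    rw [norm_mul, norm_star] at h2
    nlinarith [norm_nonneg U.det]
  have hcn : ‖c‖ = 1 := by
    have h1 : ‖c‖ ^ d = 1 := by rw [← norm_pow, hc, hdet]
    rcases lt_trichotomy ‖c‖ 1 with h | h | h
    · exact absurd h1 (by
        have := pow_lt_one₀ (norm_nonneg c) h (by omega : d ≠ 0)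
        linarith)
    · exact h
    · exact absurd h1 (by
        have := one_lt_pow₀ h (by omega : d ≠ 0)
        linarith)
  have hc0 : c ≠ 0 := by intro h; simp [h] at hcn
  have hstarc : star c * c = 1 := by
    have h2 : Complex.normSq c = 1 := by
      have : ‖c‖ = 1 := hcn
      rw [Complex.normSq_eq_norm_sq, this]; norm_num
    rw [Complex.star_def, mul_comm, Complex.mul_conj, h2]
    norm_num
  have hV : (c⁻¹ • U) ∈ SU d := by
    constructor
    · rw [Matrix.mem_unitaryGroup_iff]
      have hU1 : U * star U = 1 := (Matrix.mem_unitaryGroup_iff).mp hU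
      rw [star_smul, smul_mul_smul_comm, hU1, star_inv₀]
      have : c⁻¹ * (star c)⁻¹ = 1 := by
        rw [← mul_inv, mul_comm c (star c), hstarc, inv_one]
      rw [this, one_smul]
    · rw [Matrix.det_smul, Fintype.card_fin, inv_pow, hc]
      have hdne : U.det ≠ 0 := by intro h; rw [h] at hdet; simp at hdet
      exact inv_mul_cancel₀ hdne
  have : U = c • (c⁻¹ • U) := by rw [smul_smul, mul_inv_cancel₀ hc0, one_smul]
  rw [this]
  exact Submodule.smul_mem _ _ (Submodule.subset_span hV)

/-- The complex linear span of `SU(d)` is all of `M_d(ℂ)`, for every `d ≥ 1`. -/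
theorem span_SU_eq_top (d : ℕ) (hd : 1 ≤ d) :
    Submodule.span ℂ (SU d) = (⊤ : Submodule ℂ (Matrix (Fin d) (Fin d) ℂ)) := by
  set S := Submodule.span ℂ (SU d) with hS
  have hone : (1 : Matrix (Fin d) (Fin d) ℂ) ∈ S := by
    apply Submodule.subset_span
    refine ⟨?_, Matrix.det_one⟩
    rw [Matrix.mem_unitaryGroup_iff]; simp
  have hstar : ∀ a b : Fin d, star (Matrix.single a b (1 : ℂ))
      = Matrix.single b a (1 : ℂ) := by
    intro a b
    ext i j
    simp [Matrix.star_apply, Matrix.single, and_comm]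
  -- diagonal matrix units
  have hdiag : ∀ k : Fin d, Matrix.single k k (1 : ℂ) ∈ S := by
    intro k
    set E := Matrix.single k k (1 : ℂ) with hE
    have hEE : E * E = E := by
      simp [hE, Matrix.single_mul_single_same]
    have hD : (1 - E - E) ∈ Matrix.unitaryGroup (Fin d) ℂ := by
      rw [Matrix.mem_unitaryGroup_iff]
      rw [star_sub, star_sub, star_one, hE, hstar, ← hE]
      simp only [mul_sub, sub_mul, mul_one, one_mul, hEE]
      abel
    have hDS : (1 - E - E) ∈ S := unitary_mem_span_SU hd _ hD
    have key : E = (2⁻¹ : ℂ) • ((1 : Matrix (Fin d) (Fin d) ℂ) - (1 - E - E)) := by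
      module
    rw [key]
    exact Submodule.smul_mem _ _ (Submodule.sub_mem _ hone hDS)
  -- off-diagonal matrix units
  have hoff : ∀ k l : Fin d, Matrix.single k l (1 : ℂ) ∈ S := by
    intro k l
    rcases eq_or_ne k l with rfl | hkl
    · exact hdiag k
    set Ekk := Matrix.single k k (1 : ℂ) with hEkk
    set Ell := Matrix.single l l (1 : ℂ) with hEll
    set Ekl := Matrix.single k l (1 : ℂ) with hEkl
    set Elk := Matrix.single l k (1 : ℂ) with hElk
    have hmul : ∀ (a b c e : Fin d), Matrix.single a b (1 : ℂ) *
        Matrix.single c e (1 : ℂ) =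
        if b = c then Matrix.single a e (1 : ℂ) else 0 := by
      intro a b c e
      split
      · next h => subst h; rw [Matrix.single_mul_single_same, one_mul]
      · next h => exact Matrix.single_mul_single_of_ne 1 a b c h 1
    have hA : (1 - Ekk - Ell + Ekl + Elk) ∈ Matrix.unitaryGroup (Fin d) ℂ := by
      rw [Matrix.mem_unitaryGroup_iff]
      simp only [star_add, star_sub, star_one, hEkk, hEll, hEkl, hElk, hstar]
      simp only [mul_add, add_mul, mul_sub, sub_mul, mul_one, one_mul, hmul,
        if_pos rfl, if_neg hkl, if_neg hkl.symm, add_zero, zero_add, sub_zero, zero_sub]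
      all_goals show _ = _
      all_goals abel_nf
      all_goals simp
      all_goals abel
    have hC : (1 - Ekk - Ell + Ekl - Elk) ∈ Matrix.unitaryGroup (Fin d) ℂ := by
      rw [Matrix.mem_unitaryGroup_iff]
      simp only [star_add, star_sub, star_one, hEkk, hEll, hEkl, hElk, hstar]
      simp only [mul_add, add_mul, mul_sub, sub_mul, mul_one, one_mul, hmul,
        if_pos rfl, if_neg hkl, if_neg hkl.symm, add_zero, zero_add, sub_zero, zero_sub]
      all_goals show _ = _
      all_goals abel_nf
      all_goals simp
      all_goals abel
    have hAS : (1 - Ekk - Ell + Ekl + Elk) ∈ S := unitary_mem_span_SU hd _ hA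
    have hCS : (1 - Ekk - Ell + Ekl - Elk) ∈ S := unitary_mem_span_SU hd _ hC
    have key : Ekl = (2⁻¹ : ℂ) • ((1 - Ekk - Ell + Ekl + Elk) + (1 - Ekk - Ell + Ekl - Elk))
        - 1 + Ekk + Ell := by
      module
    rw [key]
    exact Submodule.add_mem _ (Submodule.add_mem _ (Submodule.sub_mem _
      (Submodule.smul_mem _ _ (Submodule.add_mem _ hAS hCS)) hone) (hdiag k)) (hdiag l)
  -- conclude
  rw [eq_top_iff]
  intro M _
  rw [Matrix.matrix_eq_sum_single M]
  apply Submodule.sum_mem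
  intro i _
  apply Submodule.sum_mem
  intro j _
  have : Matrix.single i j (M i j) = (M i j) • Matrix.single i j (1 : ℂ) := by
    rw [Matrix.smul_single, smul_eq_mul, mul_one]
  rw [this]
  exact Submodule.smul_mem _ _ (hoff i j)
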